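/- Let 1 ≤ p < ∞, η ∈ (0,1), ε > 0, let f be holomorphic on 𝔻, and set 𝒜 = {α ∈ 𝔻 : (1−|α|)^p |f′(α)|^p < (ε / m(Δ_η(α))) ∫_{Δ_η(α)} (1−|z|)^p |f′(z)|^p dm(z)}. Then there exist a constant C₁ = C₁(η) > 0 and β ∈ (1/2, 1), both depending only on η (and p), such that for every ξ ∈ 𝕋, ∫_{𝒜 ∩ Γ_{1/2}(ξ)} (1−|z|)^p |f′(z)|^p dm(z)/(1−|z|) ≤ ε C₁ ∫_{Γ_β(ξ)} (1−|z|)^p |f′(z)|^p dm(z)/(1−|z|). -/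

import Mathlib

open MeasureTheory Complex Set
open scoped Real ENNReal

noncomputable section

/-- The open unit disc in `ℂ`. -/
def unitDisc : Set ℂ := Metric.ball 0 1

/-- The normalized area Lebesgue measure on `ℂ`. -/
def mA : Measure ℂ := (ENNReal.ofReal Real.pi)⁻¹ • (volume : Measure ℂ)

/-- The cone-like region `Γ_β(ξ) = {|z| < β} ∪ ⋃_{|z|<β} [z, ξ)`. -/
def coneRegion (β : ℝ) (ξ : ℂ) : Set ℂ :=
  {z : ℂ | ‖z‖ < β} ∪
    ⋃ z ∈ {w : ℂ | ‖w‖ < β},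
      {w : ℂ | ∃ t : ℝ, 0 ≤ t ∧ t < 1 ∧ w = (1 - t) * z + t * ξ}

/-- The pseudohyperbolic disc `Δ(α,η)`. -/
def pDisc (α : ℂ) (η : ℝ) : Set ℂ :=
  {z ∈ unitDisc | ‖(α - z) / (1 - (starRingEnd ℂ) α * z)‖ < η}

/-- The Euclidean disc `Δ_η(α) = {z : |z - α| < η(1-|α|)}`. -/
def eDisc (η : ℝ) (α : ℂ) : Set ℂ :=
  {z : ℂ | ‖z - α‖ < η * (1 - ‖α‖)}

/-- The tent-space expression of `f` with aperture `β`, restricted to a set `G`: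
`(∫_𝕋 (∫_{Γ_β(ξ) ∩ G} |f(z)|^p dm(z)/(1-|z|))^{q/p} |dξ|)^{1/q}`. -/
def tentNormOn (p q β : ℝ) (G : Set ℂ) (f : ℂ → ℂ) : ℝ≥0∞ :=
  (∫⁻ θ in Set.Ioo 0 (2 * Real.pi),
      (∫⁻ z in coneRegion β (Complex.exp (θ * Complex.I)) ∩ G,
          ENNReal.ofReal (‖f z‖ ^ p / (1 - ‖z‖)) ∂mA) ^ (q / p))
    ^ (1 / q)

/-- The tent space (quasi-)norm `‖f‖_{T_p^q}` (aperture `1/2`). -/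
def tentNorm (p q : ℝ) (f : ℂ → ℂ) : ℝ≥0∞ := tentNormOn p q (1/2) Set.univ f

/-- `ρ_{p,q}(f) = ((1/2π)∫_0^{2π} (∫_0^1 |f(re^{iθ})|^p dr)^{q/p} dθ)^{1/q}`. -/
def rho (p q : ℝ) (f : ℂ → ℂ) : ℝ≥0∞ :=
  ((ENNReal.ofReal (2 * Real.pi))⁻¹ *
      ∫⁻ θ in Set.Ioo 0 (2 * Real.pi),
        (∫⁻ r in Set.Ioo (0:ℝ) 1,
            ENNReal.ofReal (‖f ((r : ℂ) * Complex.exp (θ * Complex.I))‖ ^ p))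
          ^ (q / p)) ^ (1 / q)

/-- Membership in `RM(p,q)`. -/
def memRM (p q : ℝ) (f : ℂ → ℂ) : Prop :=
  DifferentiableOn ℂ f unitDisc ∧ rho p q f < ⊤

/-- The Pommerenke integration operator `T_g f(z) = ∫_0^z f(ζ) g'(ζ) dζ`. -/
def Tg (g f : ℂ → ℂ) (z : ℂ) : ℂ :=
  z * ∫ t in Set.Ioo (0:ℝ) 1, f ((t : ℂ) * z) * deriv g ((t : ℂ) * z)

/-- The companion operator `S_g f(z) = ∫_0^z f'(ζ) g(ζ) dζ`. -/
def Sg (g f : ℂ → ℂ) (z : ℂ) : ℂ :=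
  z * ∫ t in Set.Ioo (0:ℝ) 1, deriv f ((t : ℂ) * z) * g ((t : ℂ) * z)

/-- Membership in the Bloch space `𝓑`. -/
def memBloch (g : ℂ → ℂ) : Prop :=
  DifferentiableOn ℂ g unitDisc ∧
    ∃ M : ℝ, ∀ z ∈ unitDisc, ‖deriv g z‖ * (1 - ‖z‖ ^ 2) ≤ M

/-- Membership in `H^∞`. -/
def memHinf (g : ℂ → ℂ) : Prop :=
  DifferentiableOn ℂ g unitDisc ∧ ∃ M : ℝ, ∀ z ∈ unitDisc, ‖g z‖ ≤ M

/-- The set `E_λ(α) = {z ∈ Δ_η(α) : |f(z)|^p ≥ λ |f(α)|^p}`. -/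
def Eset (p η : ℝ) (f : ℂ → ℂ) (lam : ℝ) (α : ℂ) : Set ℂ :=
  {z ∈ eDisc η α | lam * ‖f α‖ ^ p ≤ ‖f z‖ ^ p}

/-- The average `B_λ f(α) = (1/m(E_λ(α))) ∫_{E_λ(α)} |f(z)|^p dm(z)` (in `ℝ≥0∞`). -/
def Bavg (p η : ℝ) (f : ℂ → ℂ) (lam : ℝ) (α : ℂ) : ℝ≥0∞ :=
  (∫⁻ z in Eset p η f lam α, ENNReal.ofReal (‖f z‖ ^ p) ∂mA) /
    mA (Eset p η f lam α)

/-- The derivative variant `E_λ(α) = {z ∈ Δ_η(α) : (1-|z|)^p |f'(z)|^p ≥ λ (1-|α|)^p |f'(α)|^p}`. -/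
def EsetD (p η : ℝ) (f : ℂ → ℂ) (lam : ℝ) (α : ℂ) : Set ℂ :=
  {z ∈ eDisc η α |
    lam * ((1 - ‖α‖) ^ p * ‖deriv f α‖ ^ p) ≤
      (1 - ‖z‖) ^ p * ‖deriv f z‖ ^ p}

/-- The derivative variant of `B_λ f(α)` (in `ℝ≥0∞`). -/
def BavgD (p η : ℝ) (f : ℂ → ℂ) (lam : ℝ) (α : ℂ) : ℝ≥0∞ :=
  (∫⁻ z in EsetD p η f lam α,
      ENNReal.ofReal (‖deriv f z‖ ^ p * (1 - ‖z‖) ^ p) ∂mA) /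
    mA (EsetD p η f lam α)

/-- The test functions `f_α(z) = (1-|α|²)^{γ-1/p-1/q} / (1-ᾱz)^γ`. -/
def testFun (p q γ : ℝ) (α z : ℂ) : ℂ :=
  (((1 - ‖α‖ ^ 2) ^ (γ - 1/p - 1/q) : ℝ) : ℂ) /
    (1 - (starRingEnd ℂ) α * z) ^ (γ : ℂ)

/-! On the exceptional set, `(1-|z|)^p |f'(z)|^p / (1-|z|)` is at most `ε` times the integral of
the same quantity over `Δ_η(z)`, divided by `m(Δ_η(z)) (1-|z|) = η² (1-|z|)³`. Integrating over
`Γ_{1/2}(ξ)` and exchanging the order of integration, it remains to integrate `1/(η² (1-|z|)³)`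
over the `z ∈ Γ_{1/2}(ξ)` with `w ∈ Δ_η(z)`. These `z` lie in the disc of radius
`η (1-|w|)/(1-η)` about `w` and satisfy `1-|w| ≤ (1+η)(1-|z|)`, which gives the bound
`C₁/(1-|w|)` with `C₁ = (1+η)³/(1-η)²`; and they exist only if `w` lies in the Stolz angle
`|w-ξ| < 4/(1-η) (1-|w|)`, which is contained in `Γ_β(ξ)` for `β = 1 - (1-η)²/64`. -/

lemma mem_coneRegion_iff {β : ℝ} {ξ w : ℂ} :
    w ∈ coneRegion β ξ ↔ ∃ t ∈ Ico (0 : ℝ) 1, ‖w - t * ξ‖ < β * (1 - t) := by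
  constructor
  · rintro (hw | hw)
    · exact ⟨0, ⟨le_rfl, one_pos⟩, by simpa using hw⟩
    · simp only [mem_iUnion, mem_ofPred_eq] at hw
      obtain ⟨u, hu, t, ht0, ht1, rfl⟩ := hw
      refine ⟨t, ⟨ht0, ht1⟩, ?_⟩
      have h1t : 0 < 1 - t := sub_pos.mpr ht1
      rw [add_sub_cancel_right, norm_mul, ← ofReal_one, ← ofReal_sub, norm_real,
        Real.norm_of_nonneg h1t.le, mul_comm β]
      exact mul_lt_mul_of_pos_left hu h1t
  · rintro ⟨t, ⟨ht0, ht1⟩, hw⟩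
    have h1t : 0 < 1 - t := sub_pos.mpr ht1
    have h1t' : (1 : ℂ) - t ≠ 0 := by exact_mod_cast h1t.ne'
    refine Or.inr (mem_biUnion (x := (w - t * ξ) / (1 - t)) ?_ ⟨t, ht0, ht1, ?_⟩)
    · rw [mem_ofPred_eq, norm_div, ← ofReal_one, ← ofReal_sub, norm_real,
        Real.norm_of_nonneg h1t.le, div_lt_iff₀ h1t]
      exact hw
    · field_simp
      ring

lemma isOpen_coneRegion (β : ℝ) (ξ : ℂ) : IsOpen (coneRegion β ξ) := by
  have : coneRegion β ξ = ⋃ t ∈ Ico (0 : ℝ) 1, Metric.ball (t * ξ) (β * (1 - t)) := by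
    ext w
    simp only [mem_coneRegion_iff, mem_iUnion, Metric.mem_ball, dist_eq, exists_prop]
  rw [this]
  exact isOpen_biUnion fun _ _ => Metric.isOpen_ball

section coneRegion

variable {β : ℝ} {ξ z : ℂ}

lemma norm_lt_one_of_mem_coneRegion (hβ : β ≤ 1) (hξ : ‖ξ‖ ≤ 1) (hz : z ∈ coneRegion β ξ) :
    ‖z‖ < 1 := by
  obtain ⟨t, ⟨ht0, ht1⟩, hz⟩ := mem_coneRegion_iff.mp hz
  have : ‖(t : ℂ) * ξ‖ ≤ t := by
    rw [norm_mul, norm_real, Real.norm_of_nonneg ht0]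
    exact mul_le_of_le_one_right ht0 hξ
  have := norm_le_norm_add_norm_sub' z ((t : ℂ) * ξ)
  nlinarith

lemma mul_norm_sub_lt_of_mem_coneRegion (hβ : β ≤ 1) (hξ : ‖ξ‖ ≤ 1) (hz : z ∈ coneRegion β ξ) :
    (1 - β) * ‖z - ξ‖ < (1 + β) * (1 - ‖z‖) := by
  obtain ⟨t, ⟨ht0, ht1⟩, hz⟩ := mem_coneRegion_iff.mp hz
  have htξ : ‖(t : ℂ) * ξ‖ ≤ t := by
    rw [norm_mul, norm_real, Real.norm_of_nonneg ht0]
    exact mul_le_of_le_one_right ht0 hξ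
  have hξtξ : ‖(t : ℂ) * ξ - ξ‖ ≤ 1 - t := by
    rw [show (t : ℂ) * ξ - ξ = ((t - 1 : ℝ) : ℂ) * ξ by push_cast; ring, norm_mul, norm_real,
      Real.norm_of_nonpos (by linarith)]
    nlinarith [norm_nonneg ξ]
  have hβ0 : 0 < β := pos_of_mul_pos_left ((norm_nonneg _).trans_lt hz) (by linarith)
  have h1 := norm_le_norm_add_norm_sub' z ((t : ℂ) * ξ)
  have h2 := norm_sub_le_norm_sub_add_norm_sub z ((t : ℂ) * ξ) ξ
  nlinarith

end coneRegion

lemma mem_coneRegion_of_norm_sub_lt {M : ℝ} {ξ w : ℂ} (hM : 0 ≤ M) (hξ : ‖ξ‖ = 1)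
    (hw : ‖w - ξ‖ < M * (1 - ‖w‖)) : w ∈ coneRegion (1 - (4 * M ^ 2)⁻¹) ξ := by
  set d := ‖w - ξ‖
  have hdw : 1 - ‖w‖ ≤ d := by
    simpa [hξ] using norm_sub_norm_le ξ w |>.trans (norm_sub_rev ξ w).le
  have hw1 : 0 < 1 - ‖w‖ := pos_of_mul_pos_right ((norm_nonneg _).trans_lt hw) hM
  have hd : 0 < d := hw1.trans_le hdw
  have hM1 : 1 < M := by nlinarith
  set P := (w * (starRingEnd ℂ) ξ).re
  have hP : P ≤ ‖w‖ := (re_le_norm _).trans (by simp [hξ])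
  have hexp (t : ℝ) : ‖w - t * ξ‖ ^ 2 = d ^ 2 + (1 - t) ^ 2 - 2 * (1 - t) * (1 - P) := by
    have hξ2 : ξ.re ^ 2 + ξ.im ^ 2 = 1 := by
      have := congrArg (· ^ 2) hξ
      simp only [Complex.sq_norm, normSq_apply, one_pow] at this
      linarith
    simp only [d, P, Complex.sq_norm, normSq_apply, sub_re, sub_im, mul_re, mul_im, ofReal_re,
      ofReal_im, conj_re, conj_im]
    linear_combination (t ^ 2 - 1) * hξ2
  have hβ : 0 < 1 - (4 * M ^ 2)⁻¹ := by
    rw [sub_pos]; exact inv_lt_one_of_one_lt₀ (by nlinarith)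
  rw [mem_coneRegion_iff]
  -- Far from the vertex `w` lies in the disc `‖w‖ < β`; near it, in the disc about the point
  -- of the radius at distance `2 M ‖w - ξ‖` from `ξ`.
  by_cases hfar : 1 < 2 * M * d
  · refine ⟨0, ⟨le_rfl, one_pos⟩, ?_⟩
    have : (4 * M ^ 2)⁻¹ < 1 - ‖w‖ := by
      rw [inv_lt_iff_one_lt_mul₀ (by positivity)]; nlinarith
    simpa using (by linarith : ‖w‖ < 1 - (4 * M ^ 2)⁻¹)
  · push Not at hfar
    refine ⟨1 - 2 * M * d, ⟨by linarith, by nlinarith⟩, ?_⟩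
    set q := (4 * M ^ 2)⁻¹
    have hq : q * (4 * M ^ 2) = 1 := inv_mul_cancel₀ (by positivity)
    have hMP : d < M * (1 - P) := by nlinarith
    have hsq : ((1 - q) * (1 - (1 - 2 * M * d))) ^ 2 =
        4 * M ^ 2 * d ^ 2 - 2 * d ^ 2 + q * d ^ 2 := by
      linear_combination (q * d ^ 2 - 2 * d ^ 2) * hq
    rw [← pow_lt_pow_iff_left₀ (norm_nonneg _) (by nlinarith) two_ne_zero, hexp, hsq]
    nlinarith [mul_lt_mul_of_pos_left hMP (by positivity : 0 < 4 * d),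
      mul_pos (inv_pos.2 (by positivity : 0 < 4 * M ^ 2)) (mul_pos hd hd)]

lemma eDisc_eq_ball (η : ℝ) (z : ℂ) : eDisc η z = Metric.ball z (η * (1 - ‖z‖)) := by
  ext
  simp [eDisc, dist_eq]

section eDisc

variable {η : ℝ} {z w : ℂ}

lemma norm_lt_one_of_mem_eDisc (hη : 0 ≤ η) (hw : w ∈ eDisc η z) : ‖z‖ < 1 :=
  sub_pos.mp (pos_of_mul_pos_right ((norm_nonneg _).trans_lt hw) hη)

lemma one_sub_mul_lt_of_mem_eDisc (hw : w ∈ eDisc η z) : (1 - η) * (1 - ‖z‖) < 1 - ‖w‖ := by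
  have hw' : ‖w - z‖ < η * (1 - ‖z‖) := hw
  linarith [norm_le_norm_add_norm_sub' w z]

lemma one_sub_norm_lt_of_mem_eDisc (hw : w ∈ eDisc η z) : 1 - ‖w‖ < (1 + η) * (1 - ‖z‖) := by
  have hw' : ‖w - z‖ < η * (1 - ‖z‖) := hw
  linarith [norm_le_norm_add_norm_sub w z]

lemma mem_coneRegion_of_mem_eDisc (hη : η ∈ Ioo 0 1) {ξ : ℂ} (hξ : ‖ξ‖ = 1)
    (hz : z ∈ coneRegion (1 / 2) ξ) (hw : w ∈ eDisc η z) :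
    w ∈ coneRegion (1 - (1 - η) ^ 2 / 64) ξ := by
  obtain ⟨hη0, hη1⟩ := hη
  have hzξ := mul_norm_sub_lt_of_mem_coneRegion (by norm_num) hξ.le hz
  have hwz : ‖w - z‖ < η * (1 - ‖z‖) := hw
  have hwξ : ‖w - ξ‖ < 4 / (1 - η) * (1 - ‖w‖) := by
    have hz1 := sub_pos.mpr (norm_lt_one_of_mem_eDisc hη0.le hw)
    have hwξ' : ‖w - ξ‖ < 4 * (1 - ‖z‖) := by
      nlinarith [norm_sub_le_norm_sub_add_norm_sub w z ξ]
    rw [div_mul_eq_mul_div, lt_div_iff₀ (by linarith)]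
    nlinarith [one_sub_mul_lt_of_mem_eDisc hw, mul_lt_mul_of_pos_right hwξ' (sub_pos.mpr hη1)]
  convert mem_coneRegion_of_norm_sub_lt (by positivity) hξ hwξ using 2
  have : 1 - η ≠ 0 := by linarith
  field_simp
  ring

end eDisc

lemma mA_ball (a : ℂ) (r : ℝ) : mA (Metric.ball a r) = ENNReal.ofReal r ^ 2 := by
  rw [mA, Measure.smul_apply, smul_eq_mul, Complex.volume_ball, ← NNReal.coe_real_pi,
    ENNReal.ofReal_coe_nnreal, mul_comm, mul_assoc,
    ENNReal.mul_inv_cancel (by simpa using NNReal.pi_pos.ne') ENNReal.coe_ne_top, mul_one]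

instance : SFinite mA := by
  unfold mA
  infer_instance

section Slices

variable {α β : Type*} [MeasurableSpace α] [MeasurableSpace β] {μ : Measure α} {ν : Measure β}
  {s : Set (α × β)}

lemma measurable_setLIntegral_prodMk_left [SFinite ν] (hs : MeasurableSet s) (g : β → ℝ≥0∞) :
    Measurable fun x => ∫⁻ y in Prod.mk x ⁻¹' s, g y ∂ν := by
  simpa only [withDensity_apply'] using measurable_measure_prodMk_left (ν := ν.withDensity g) hs

lemma lintegral_mul_setLIntegral_prodMk_left [SFinite μ] [SFinite ν] (hs : MeasurableSet s)
    {f : α → ℝ≥0∞} {g : β → ℝ≥0∞} (hf : Measurable f) (hg : Measurable g) :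
    ∫⁻ x, f x * ∫⁻ y in Prod.mk x ⁻¹' s, g y ∂ν ∂μ =
      ∫⁻ y, g y * ∫⁻ x in (·, y) ⁻¹' s, f x ∂μ ∂ν := by
  have hF : Measurable (s.indicator fun q : α × β => f q.1 * g q.2) := by fun_prop
  calc ∫⁻ x, f x * ∫⁻ y in Prod.mk x ⁻¹' s, g y ∂ν ∂μ
      = ∫⁻ x, ∫⁻ y, s.indicator (fun q => f q.1 * g q.2) (x, y) ∂ν ∂μ := by
        refine lintegral_congr fun x => ?_
        rw [← lintegral_indicator (measurable_prodMk_left hs), ← lintegral_const_mul]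
        · congr with y
          by_cases h : (x, y) ∈ s <;> simp [h]
        · exact hg.indicator (measurable_prodMk_left hs)
    _ = ∫⁻ y, ∫⁻ x, s.indicator (fun q => f q.1 * g q.2) (x, y) ∂μ ∂ν :=
        lintegral_lintegral_swap hF.aemeasurable
    _ = ∫⁻ y, g y * ∫⁻ x in (·, y) ⁻¹' s, f x ∂μ ∂ν := by
        refine lintegral_congr fun y => ?_
        rw [← lintegral_indicator (measurable_prodMk_right hs), ← lintegral_const_mul]
        · congr with x
          by_cases h : (x, y) ∈ s <;> simp [h, mul_comm]
        · exact hf.indicator (measurable_prodMk_right hs)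

end Slices

lemma div_le_div_of_mul_mA_eDisc_le {η : ℝ} (hη : 0 < η) {z : ℂ} (hz : ‖z‖ < 1)
    {x y : ℝ≥0∞} (h : x * mA (eDisc η z) ≤ y) :
    x / ENNReal.ofReal (1 - ‖z‖) ≤ y / ENNReal.ofReal (η ^ 2 * (1 - ‖z‖) ^ 3) := by
  have hz' : 0 < 1 - ‖z‖ := sub_pos.mpr hz
  have hm : mA (eDisc η z) = ENNReal.ofReal ((η * (1 - ‖z‖)) ^ 2) := by
    rw [eDisc_eq_ball, mA_ball, ENNReal.ofReal_pow (by positivity)]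
  have hm0 : mA (eDisc η z) ≠ 0 := by rw [hm]; positivity
  calc x / ENNReal.ofReal (1 - ‖z‖)
      = x * mA (eDisc η z) / (ENNReal.ofReal (1 - ‖z‖) * mA (eDisc η z)) :=
        (ENNReal.mul_div_mul_right _ _ hm0 (by simp [hm])).symm
    _ ≤ y / (ENNReal.ofReal (1 - ‖z‖) * mA (eDisc η z)) := by gcongr
    _ = y / ENNReal.ofReal (η ^ 2 * (1 - ‖z‖) ^ 3) := by
        rw [hm, ← ENNReal.ofReal_mul hz'.le]
        ring_nf

lemma setLIntegral_indicator_inv_le {η : ℝ} (hη : η ∈ Ioo 0 1) {ξ : ℂ} (hξ : ‖ξ‖ = 1) (w : ℂ) :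
    ∫⁻ z in {z | w ∈ eDisc η z}, (coneRegion (1 / 2) ξ).indicator
        (fun z => (ENNReal.ofReal (η ^ 2 * (1 - ‖z‖) ^ 3))⁻¹) z ∂mA ≤
      (coneRegion (1 - (1 - η) ^ 2 / 64) ξ).indicator
        (fun w => ENNReal.ofReal ((1 + η) ^ 3 / (1 - η) ^ 2) / ENNReal.ofReal (1 - ‖w‖)) w := by
  have ⟨hη0, hη1⟩ := hη
  by_cases hwΓ : w ∈ coneRegion (1 - (1 - η) ^ 2 / 64) ξ
  · rw [indicator_of_mem hwΓ]
    have hw1 : 0 < 1 - ‖w‖ :=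
      sub_pos.mpr (norm_lt_one_of_mem_coneRegion (by nlinarith) hξ.le hwΓ)
    set r := η * (1 - ‖w‖) / (1 - η)
    have hball : {z | w ∈ eDisc η z} ⊆ Metric.ball w r := fun z hz => by
      have hwz : ‖w - z‖ < η * (1 - ‖z‖) := hz
      rw [Metric.mem_ball, dist_comm, dist_eq, lt_div_iff₀ (by linarith)]
      nlinarith [one_sub_mul_lt_of_mem_eDisc hz]
    have hbound (z : ℂ) (hz : z ∈ {z | w ∈ eDisc η z}) :
        (coneRegion (1 / 2) ξ).indicator
            (fun z => (ENNReal.ofReal (η ^ 2 * (1 - ‖z‖) ^ 3))⁻¹) z ≤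
          ENNReal.ofReal ((1 + η) ^ 3 / (η ^ 2 * (1 - ‖w‖) ^ 3)) := by
      have hz1 : 0 < 1 - ‖z‖ := sub_pos.mpr (norm_lt_one_of_mem_eDisc hη0.le hz)
      have hwz := pow_le_pow_left₀ hw1.le (one_sub_norm_lt_of_mem_eDisc hz).le 3
      refine (indicator_le_self _ _ z).trans ?_
      rw [← ENNReal.ofReal_inv_of_pos (by positivity)]
      apply ENNReal.ofReal_le_ofReal
      rw [inv_eq_one_div, div_le_div_iff₀ (by positivity) (by positivity)]
      nlinarith [mul_le_mul_of_nonneg_left hwz (sq_nonneg η)]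
    calc _ ≤ ∫⁻ _ in {z | w ∈ eDisc η z},
            ENNReal.ofReal ((1 + η) ^ 3 / (η ^ 2 * (1 - ‖w‖) ^ 3)) ∂mA :=
          setLIntegral_mono measurable_const hbound
      _ = ENNReal.ofReal ((1 + η) ^ 3 / (η ^ 2 * (1 - ‖w‖) ^ 3)) * mA {z | w ∈ eDisc η z} :=
          setLIntegral_const _ _
      _ ≤ ENNReal.ofReal ((1 + η) ^ 3 / (η ^ 2 * (1 - ‖w‖) ^ 3)) * mA (Metric.ball w r) := by
          gcongr
      _ = _ := by
          rw [mA_ball, ← ENNReal.ofReal_pow (by positivity), ← ENNReal.ofReal_mul (by positivity),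
            ← ENNReal.ofReal_div_of_pos hw1]
          have : 1 - η ≠ 0 := by linarith
          congr 1
          simp only [r]
          field_simp
  · rw [indicator_of_notMem hwΓ]
    refine (setLIntegral_mono (g := fun _ => 0) measurable_const fun z hz => ?_).trans_eq
      lintegral_zero
    rw [indicator_of_notMem fun hzG => hwΓ (mem_coneRegion_of_mem_eDisc hη hξ hzG hz)]

theorem setLIntegral_exceptional_inter_coneRegion_le {g : ℂ → ℝ≥0∞} (hg : Measurable g) {η : ℝ}
    (hη : η ∈ Ioo 0 1) (ε : ℝ≥0∞) {ξ : ℂ} (hξ : ‖ξ‖ = 1) :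
    ∫⁻ z in {α ∈ unitDisc | g α * mA (eDisc η α) < ε * ∫⁻ w in eDisc η α, g w ∂mA} ∩
        coneRegion (1 / 2) ξ, g z / ENNReal.ofReal (1 - ‖z‖) ∂mA ≤
      ε * ENNReal.ofReal ((1 + η) ^ 3 / (1 - η) ^ 2) *
        ∫⁻ z in coneRegion (1 - (1 - η) ^ 2 / 64) ξ, g z / ENNReal.ofReal (1 - ‖z‖) ∂mA := by
  set G := coneRegion (1 / 2) ξ
  set Γ := coneRegion (1 - (1 - η) ^ 2 / 64) ξ
  set C := ENNReal.ofReal ((1 + η) ^ 3 / (1 - η) ^ 2)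
  set k : ℂ → ℝ≥0∞ := fun z => (ENNReal.ofReal (η ^ 2 * (1 - ‖z‖) ^ 3))⁻¹
  set D : Set (ℂ × ℂ) := {q | q.2 ∈ eDisc η q.1}
  have hD : MeasurableSet D := measurableSet_lt (f := fun q : ℂ × ℂ => ‖q.2 - q.1‖)
    (g := fun q => η * (1 - ‖q.1‖)) (by fun_prop) (by fun_prop)
  have hk : Measurable k := by fun_prop
  have hkI : Measurable fun z => k z * ∫⁻ w in eDisc η z, g w ∂mA :=
    hk.mul (measurable_setLIntegral_prodMk_left hD g)
  calc _ ≤ ∫⁻ z in {α ∈ unitDisc | g α * mA (eDisc η α) < ε * ∫⁻ w in eDisc η α, g w ∂mA} ∩ G,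
          ε * (k z * ∫⁻ w in eDisc η z, g w ∂mA) ∂mA := by
        refine setLIntegral_mono (hkI.const_mul ε) fun z ⟨⟨hz, hA⟩, _⟩ => ?_
        refine (div_le_div_of_mul_mA_eDisc_le hη.1 (mem_ball_zero_iff.mp hz) hA.le).trans_eq ?_
        simp only [k, div_eq_mul_inv]
        ring
    _ ≤ ∫⁻ z in G, ε * (k z * ∫⁻ w in eDisc η z, g w ∂mA) ∂mA :=
        lintegral_mono_set inter_subset_right
    _ = ε * ∫⁻ z, G.indicator k z * ∫⁻ w in Prod.mk z ⁻¹' D, g w ∂mA ∂mA := by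
        rw [lintegral_const_mul _ hkI,
          ← lintegral_indicator (isOpen_coneRegion _ _).measurableSet]
        simp_rw [indicator_mul_left]
        rfl
    _ = ε * ∫⁻ w, g w * ∫⁻ z in (·, w) ⁻¹' D, G.indicator k z ∂mA ∂mA := by
        rw [lintegral_mul_setLIntegral_prodMk_left hD
          (hk.indicator (isOpen_coneRegion _ _).measurableSet) hg]
    _ ≤ ε * ∫⁻ w, g w * Γ.indicator (fun w => C / ENNReal.ofReal (1 - ‖w‖)) w ∂mA := by
        gcongr with w
        exact setLIntegral_indicator_inv_le hη hξ w
    _ = ε * C * ∫⁻ w in Γ, g w / ENNReal.ofReal (1 - ‖w‖) ∂mA := by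
        simp_rw [← indicator_mul_right]
        rw [lintegral_indicator (isOpen_coneRegion _ _).measurableSet, mul_assoc,
          ← lintegral_const_mul' _ _ ENNReal.ofReal_ne_top]
        congr with w
        rw [← mul_div_assoc, mul_comm, mul_div_assoc]

theorem lemma_A_estimate_deriv_general (p : ℝ) (η : ℝ) (hη : η ∈ Set.Ioo (0:ℝ) 1) :
    ∃ C₁ > (0:ℝ), ∃ β ∈ Set.Ioo (1/2 : ℝ) 1, ∀ ε > (0:ℝ), ∀ f : ℂ → ℂ,
      DifferentiableOn ℂ f unitDisc → ∀ ξ : ℂ, ‖ξ‖ = 1 →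
        (∫⁻ z in {α ∈ unitDisc |
              ENNReal.ofReal ((1 - ‖α‖) ^ p * ‖deriv f α‖ ^ p) *
                  mA (eDisc η α) <
                ENNReal.ofReal ε *
                  ∫⁻ w in eDisc η α,
                    ENNReal.ofReal ((1 - ‖w‖) ^ p * ‖deriv f w‖ ^ p)
                      ∂mA} ∩
            coneRegion (1/2) ξ,
            ENNReal.ofReal
              ((1 - ‖z‖) ^ p * ‖deriv f z‖ ^ p / (1 - ‖z‖))
              ∂mA) ≤
          ENNReal.ofReal (ε * C₁) *
            ∫⁻ z in coneRegion β ξ,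
              ENNReal.ofReal
                ((1 - ‖z‖) ^ p * ‖deriv f z‖ ^ p /
                  (1 - ‖z‖)) ∂mA := by
  have ⟨hη0, hη1⟩ := hη
  have hβ : 1 - (1 - η) ^ 2 / 64 ∈ Ioo (1 / 2 : ℝ) 1 := ⟨by nlinarith, by nlinarith⟩
  refine ⟨(1 + η) ^ 3 / (1 - η) ^ 2, div_pos (by positivity) (by nlinarith), _, hβ,
    fun ε hε f _ ξ hξ => ?_⟩
  have hF : Measurable fun w => ENNReal.ofReal ((1 - ‖w‖) ^ p * ‖deriv f w‖ ^ p) := by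
    have := measurable_deriv f
    fun_prop
  refine (setLIntegral_mono (hF.div (by fun_prop)) ?_).trans
    ((setLIntegral_exceptional_inter_coneRegion_le hF hη _ hξ).trans_eq ?_)
  · rintro z ⟨⟨hz, -⟩, -⟩
    exact (ENNReal.ofReal_div_of_pos (sub_pos.2 (mem_ball_zero_iff.1 hz))).le
  · rw [← ENNReal.ofReal_mul hε.le]
    refine congrArg _ (setLIntegral_congr_fun (isOpen_coneRegion _ _).measurableSet fun z hz => ?_)
    exact (ENNReal.ofReal_div_of_pos
      (sub_pos.2 (norm_lt_one_of_mem_coneRegion hβ.2.le hξ.le hz))).symm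

/-- derivative version of the exceptional-set lemma for `𝒜`,
with the quantity `(1-|z|)^p |f'(z)|^p` in place of `|f(z)|^p`. -/
theorem lemma_A_estimate_deriv (p : ℝ) (hp : 1 ≤ p) (η : ℝ) (hη : η ∈ Set.Ioo (0:ℝ) 1) :
    ∃ C₁ > (0:ℝ), ∃ β ∈ Set.Ioo (1/2 : ℝ) 1, ∀ ε > (0:ℝ), ∀ f : ℂ → ℂ,
      DifferentiableOn ℂ f unitDisc → ∀ ξ : ℂ, ‖ξ‖ = 1 →
        (∫⁻ z in {α ∈ unitDisc |
              ENNReal.ofReal ((1 - ‖α‖) ^ p * ‖deriv f α‖ ^ p) *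
                  mA (eDisc η α) <
                ENNReal.ofReal ε *
                  ∫⁻ w in eDisc η α,
                    ENNReal.ofReal ((1 - ‖w‖) ^ p * ‖deriv f w‖ ^ p)
                      ∂mA} ∩
            coneRegion (1/2) ξ,
            ENNReal.ofReal
              ((1 - ‖z‖) ^ p * ‖deriv f z‖ ^ p / (1 - ‖z‖))
              ∂mA) ≤
          ENNReal.ofReal (ε * C₁) *
            ∫⁻ z in coneRegion β ξ,
              ENNReal.ofReal
                ((1 - ‖z‖) ^ p * ‖deriv f z‖ ^ p /
                  (1 - ‖z‖)) ∂mA :=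
  lemma_A_estimate_deriv_general p η hη
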